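/- arXiv:math/0104108 — 3 statements merged into one kernel-verified Lean document; each statement's English description precedes it below -/
import Mathlib

section
/- Let U be an open star-shaped neighborhood of a point x in the real plane ℝ². If U is not convex, then there exist points y and z in U such that: (1) x, y, z are not collinear; (2) the closed triangle with vertices x, y, z is not contained in U; (3) the open triangle with vertices x, y, z together with the closed segments [x,y] and [x,z] are contained in U. -/
section Aux

variable {U : Set (ℝ × ℝ)} {x : ℝ × ℝ}

/-- Points on a segment from the star-center to a point of `U` lie in `U`. -/
lemma aux_ray (hstar : ∀ u ∈ U, segment ℝ x u ⊆ U) {u : ℝ × ℝ} (hu : u ∈ U)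
    {c : ℝ} (h0 : 0 ≤ c) (h1 : c ≤ 1) : x + c • (u - x) ∈ U :=
  hstar u hu ⟨1 - c, c, by linarith, h0, by ring, by module⟩

/-- If `x, a, b` are collinear with `a, b ∈ U` and `U` is star-shaped at `x`,
then the segment `[a,b]` lies in `U`. -/
lemma aux_collinear_seg (hstar : ∀ u ∈ U, segment ℝ x u ⊆ U) (hx : x ∈ U)
    {a b : ℝ × ℝ} (ha : a ∈ U) (hb : b ∈ U)
    (hcol : Collinear ℝ ({x, a, b} : Set (ℝ × ℝ))) : segment ℝ a b ⊆ U := by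
  obtain ⟨v, hv⟩ := (collinear_iff_of_mem (Set.mem_insert x {a, b})).1 hcol
  obtain ⟨ra, hra⟩ := hv a (by simp)
  obtain ⟨rb, hrb⟩ := hv b (by simp)
  rw [vadd_eq_add] at hra hrb
  intro p hp
  obtain ⟨s, t, hs, ht, hst, hp⟩ := hp
  have ht' : t = 1 - s := by linarith
  subst ht'
  have hpe : p = (s * ra + (1 - s) * rb) • v + x := by
    rw [← hp, hra, hrb]; module
  set γ : ℝ := s * ra + (1 - s) * rb with hγ
  have key : ∀ m : ℝ, m ≠ 0 → m • v + x ∈ U → 0 ≤ γ / m → γ / m ≤ 1 → p ∈ U := by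
    intro m hm hmU hc0 hc1
    have := aux_ray hstar hmU hc0 hc1
    have heq : x + (γ / m) • (m • v + x - x) = p := by
      rw [add_sub_cancel_right, smul_smul, div_mul_cancel₀ _ hm, hpe]; module
    rwa [heq] at this
  rcases le_total 0 γ with hγ0 | hγ0
  · set m : ℝ := max ra rb with hm
    have hγm : γ ≤ m := by
      have h1 : ra ≤ m := le_max_left _ _
      have h2 : rb ≤ m := le_max_right _ _
      nlinarith
    rcases eq_or_lt_of_le (hγ0.trans hγm) with h0 | h0
    · have : γ = 0 := by
        rcases max_choice ra rb with h | h <;> rw [hm, h] at h0 <;> nlinarith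
      rw [hpe, this, zero_smul, zero_add]; exact hx
    · have hmU : m • v + x ∈ U := by
        rcases max_choice ra rb with h | h
        · rw [hm, h, ← hra]; exact ha
        · rw [hm, h, ← hrb]; exact hb
      exact key m (ne_of_gt h0) hmU (div_nonneg hγ0 h0.le) ((div_le_one h0).2 hγm)
  · set m : ℝ := min ra rb with hm
    have hγm : m ≤ γ := by
      have h1 : m ≤ ra := min_le_left _ _
      have h2 : m ≤ rb := min_le_right _ _
      nlinarith
    rcases eq_or_lt_of_le (hγm.trans hγ0) with h0 | h0
    · have : γ = 0 := by
        rcases min_choice ra rb with h | h <;> rw [hm, h] at h0 <;> nlinarith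
      rw [hpe, this, zero_smul, zero_add]; exact hx
    · have hmU : m • v + x ∈ U := by
        rcases min_choice ra rb with h | h
        · rw [hm, h, ← hra]; exact ha
        · rw [hm, h, ← hrb]; exact hb
      have hmne : m ≠ 0 := ne_of_lt h0
      have hc0 : 0 ≤ γ / m := by
        have := div_nonneg (neg_nonneg.2 hγ0) (neg_nonneg.2 h0.le)
        rwa [neg_div_neg_eq] at this
      have hc1 : γ / m ≤ 1 := by
        rw [div_le_iff_of_neg h0]; linarith
      exact key m hmne hmU hc0 hc1

/-- Linear independence of `a - x` and `b - x` from non-collinearity. -/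
lemma aux_indep {a b : ℝ × ℝ}
    (h : ¬ Collinear ℝ ({x, a, b} : Set (ℝ × ℝ))) {c₁ c₂ : ℝ}
    (hc : c₁ • (a - x) + c₂ • (b - x) = 0) : c₁ = 0 ∧ c₂ = 0 := by
  have h1 : c₁ = 0 := by
    by_contra h1
    apply h
    rw [collinear_iff_of_mem (Set.mem_insert x {a, b})]
    refine ⟨b - x, fun p hp => ?_⟩
    simp only [Set.mem_insert_iff, Set.mem_singleton_iff] at hp
    rcases hp with rfl | rfl | rfl
    · exact ⟨0, by simp⟩
    · refine ⟨c₁⁻¹ * (-c₂), ?_⟩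
      have h2 : c₁ • (p - x) = (-c₂) • (b - x) := by
        rw [neg_smul, eq_neg_iff_add_eq_zero]; exact hc
      have h3 : p - x = (c₁⁻¹ * (-c₂)) • (b - x) := by
        rw [mul_smul, ← h2, smul_smul, inv_mul_cancel₀ h1, one_smul]
      rw [vadd_eq_add]
      exact eq_add_of_sub_eq h3
    · exact ⟨1, by rw [one_smul, vadd_eq_add, sub_add_cancel]⟩
  refine ⟨h1, ?_⟩
  rw [h1, zero_smul, zero_add] at hc
  rcases smul_eq_zero.1 hc with h2 | h2
  · exact h2
  · exfalso
    apply h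
    have hbx : b = x := sub_eq_zero.1 h2
    rw [collinear_iff_of_mem (Set.mem_insert x {a, b})]
    refine ⟨a - x, fun p hp => ?_⟩
    simp only [Set.mem_insert_iff, Set.mem_singleton_iff] at hp
    rcases hp with rfl | rfl | rfl
    · exact ⟨0, by simp⟩
    · exact ⟨1, by rw [one_smul, vadd_eq_add, sub_add_cancel]⟩
    · exact ⟨0, by rw [zero_smul, vadd_eq_add, zero_add]; exact hbx⟩

end Aux

/-- Let `U` be an open star-shaped neighborhood of a point `x` in `ℝ²`.
If `U` is not convex, then there exist points `y, z ∈ U` such that `x, y, z` are not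
collinear, the closed triangle with vertices `x, y, z` is not contained in `U`, and the
open triangle with vertices `x, y, z` together with the sides `[x,y]` and `[x,z]` is
contained in `U`. -/
theorem flag_structures_stmt0 (U : Set (ℝ × ℝ)) (x : ℝ × ℝ)
    (hU : IsOpen U) (hx : x ∈ U)
    (hstar : ∀ u ∈ U, segment ℝ x u ⊆ U)
    (hnc : ¬ Convex ℝ U) :
    ∃ y ∈ U, ∃ z ∈ U,
      ¬ Collinear ℝ ({x, y, z} : Set (ℝ × ℝ)) ∧
      ¬ (convexHull ℝ ({x, y, z} : Set (ℝ × ℝ)) ⊆ U) ∧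
      interior (convexHull ℝ ({x, y, z} : Set (ℝ × ℝ))) ⊆ U ∧
      segment ℝ x y ⊆ U ∧ segment ℝ x z ⊆ U := by
  classical
  rw [convex_iff_segment_subset] at hnc
  push_neg at hnc
  obtain ⟨a, ha, b, hb, hseg⟩ := hnc
  have hncol : ¬ Collinear ℝ ({x, a, b} : Set (ℝ × ℝ)) :=
    fun h => hseg (aux_collinear_seg hstar hx ha hb h)
  have hind : ∀ c₁ c₂ : ℝ, c₁ • (a - x) + c₂ • (b - x) = 0 → c₁ = 0 ∧ c₂ = 0 :=
    fun c₁ c₂ hc => aux_indep hncol hc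
  set S : ℝ → Set (ℝ × ℝ) :=
    fun μ => segment ℝ (x + μ • (a - x)) (x + μ • (b - x)) with hSdef
  set bad : Set ℝ := {μ | μ ∈ Set.Icc (0:ℝ) 1 ∧ ¬ S μ ⊆ U} with hbaddef
  have hS1 : S 1 = segment ℝ a b := by
    show segment ℝ (x + (1:ℝ) • (a - x)) (x + (1:ℝ) • (b - x)) = segment ℝ a b
    have e1 : x + (1:ℝ) • (a - x) = a := by module
    have e2 : x + (1:ℝ) • (b - x) = b := by module
    rw [e1, e2]
  have h1bad : (1:ℝ) ∈ bad := ⟨⟨zero_le_one, le_refl 1⟩, by rw [hS1]; exact hseg⟩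
  have hbdd : BddBelow bad := ⟨0, fun μ hμ => hμ.1.1⟩
  have hne : bad.Nonempty := ⟨1, h1bad⟩
  set lam := sInf bad with hlamdef
  have hlam_le : lam ≤ 1 := csInf_le hbdd h1bad
  have hlam0 : 0 ≤ lam := le_csInf hne fun μ hμ => hμ.1.1
  obtain ⟨ε, hε, hball⟩ := Metric.isOpen_iff.1 hU x hx
  set M : ℝ := ‖a - x‖ + ‖b - x‖ + 1 with hMdef
  have hMpos : 0 < M := by positivity
  -- small scalings of the segment lie in the ball around x
  have hSsmall : ∀ μ : ℝ, 0 ≤ μ → μ * M < ε → S μ ⊆ U := by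
    intro μ hμ0 hμε p hp
    obtain ⟨s, t, hs, ht, hst, hp⟩ := hp
    have ht' : t = 1 - s := by linarith
    subst ht'
    apply hball
    rw [Metric.mem_ball, dist_eq_norm]
    have heq : s • (x + μ • (a - x)) + (1 - s) • (x + μ • (b - x)) - x
        = (s * μ) • (a - x) + ((1 - s) * μ) • (b - x) := by module
    rw [← hp, heq]
    have hb1 : ‖(s * μ) • (a - x) + ((1 - s) * μ) • (b - x)‖
        ≤ (s * μ) * ‖a - x‖ + ((1 - s) * μ) * ‖b - x‖ := by
      refine (norm_add_le _ _).trans ?_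
      rw [norm_smul, norm_smul, Real.norm_of_nonneg (mul_nonneg hs hμ0),
        Real.norm_of_nonneg (mul_nonneg (by linarith) hμ0)]
    have hA : (0:ℝ) ≤ ‖a - x‖ := norm_nonneg _
    have hB : (0:ℝ) ≤ ‖b - x‖ := norm_nonneg _
    nlinarith [mul_nonneg (mul_nonneg hs hμ0) hB,
      mul_nonneg (mul_nonneg (show (0:ℝ) ≤ 1 - s by linarith) hμ0) hA]
  have hlam_pos : 0 < lam := by
    have hlow : ∀ μ ∈ bad, ε / M ≤ μ := by
      intro μ hμ
      by_contra hlt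
      push_neg at hlt
      exact hμ.2 (hSsmall μ hμ.1.1 ((lt_div_iff₀ hMpos).1 hlt))
    have : ε / M ≤ lam := le_csInf hne hlow
    have : 0 < ε / M := by positivity
    linarith
  -- scalings below lam are entirely inside U
  have hbelow : ∀ μ : ℝ, 0 ≤ μ → μ < lam → S μ ⊆ U := by
    intro μ hμ0 hμlam
    by_contra h
    have : μ ∈ bad := ⟨⟨hμ0, by linarith⟩, h⟩
    have := csInf_le hbdd this
    linarith
  -- the infimum is itself bad
  have hlam_bad : lam ∈ bad := by
    by_contra hnb
    have hlam_sub : S lam ⊆ U := by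
      by_contra h
      exact hnb ⟨⟨hlam0, hlam_le⟩, h⟩
    have hcpt : IsCompact (S lam) := by
      show IsCompact (segment ℝ (x + lam • (a - x)) (x + lam • (b - x)))
      rw [segment_eq_image]
      exact isCompact_Icc.image (by fun_prop)
    obtain ⟨δ, hδ, hthick⟩ := hcpt.exists_thickening_subset_open hU hlam_sub
    have hδM : 0 < δ / M := by positivity
    obtain ⟨μ, hμbad, hμlt⟩ := exists_lt_of_csInf_lt hne
      (show sInf bad < lam + δ / M by rw [← hlamdef]; linarith)
    have hμge : lam ≤ μ := csInf_le hbdd hμbad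
    apply hμbad.2
    intro p hp
    obtain ⟨s, t, hs, ht, hst, hp⟩ := hp
    have ht' : t = 1 - s := by linarith
    subst ht'
    apply hthick
    rw [Metric.mem_thickening_iff]
    refine ⟨s • (x + lam • (a - x)) + (1 - s) • (x + lam • (b - x)),
      ⟨s, 1 - s, hs, by linarith, by ring, rfl⟩, ?_⟩
    rw [dist_eq_norm]
    have heq : s • (x + μ • (a - x)) + (1 - s) • (x + μ • (b - x))
        - (s • (x + lam • (a - x)) + (1 - s) • (x + lam • (b - x)))
        = (s * (μ - lam)) • (a - x) + ((1 - s) * (μ - lam)) • (b - x) := by module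
    rw [← hp, heq]
    have hd0 : 0 ≤ μ - lam := by linarith
    have hb1 : ‖(s * (μ - lam)) • (a - x) + ((1 - s) * (μ - lam)) • (b - x)‖
        ≤ (s * (μ - lam)) * ‖a - x‖ + ((1 - s) * (μ - lam)) * ‖b - x‖ := by
      refine (norm_add_le _ _).trans ?_
      rw [norm_smul, norm_smul, Real.norm_of_nonneg (mul_nonneg hs hd0),
        Real.norm_of_nonneg (mul_nonneg (by linarith) hd0)]
    have hA : (0:ℝ) ≤ ‖a - x‖ := norm_nonneg _
    have hB : (0:ℝ) ≤ ‖b - x‖ := norm_nonneg _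
    have hμM : (μ - lam) * M < δ := by
      have := (lt_div_iff₀ hMpos).1 (show μ - lam < δ / M by linarith)
      linarith
    nlinarith [mul_nonneg (mul_nonneg hs hd0) hB,
      mul_nonneg (mul_nonneg (show (0:ℝ) ≤ 1 - s by linarith) hd0) hA]
  obtain ⟨-, hSlam⟩ := hlam_bad
  set y := x + lam • (a - x) with hydef
  set z := x + lam • (b - x) with hzdef
  have hy : y ∈ U := aux_ray hstar ha hlam0 hlam_le
  have hz : z ∈ U := aux_ray hstar hb hlam0 hlam_le
  have hlamne : lam ≠ 0 := ne_of_gt hlam_pos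
  -- characterization of the triangle
  have hhull : convexHull ℝ ({x, y, z} : Set (ℝ × ℝ))
      = ⋃ q ∈ segment ℝ y z, segment ℝ x q := by
    rw [convexHull_insert (Set.insert_nonempty y {z}), convexHull_pair,
      convexJoin_singleton_left]
  refine ⟨y, hy, z, hz, ?_, ?_, ?_, hstar y hy, hstar z hz⟩
  · -- non-collinearity
    intro hcol
    apply hncol
    obtain ⟨v, hv⟩ := (collinear_iff_of_mem (Set.mem_insert x {y, z})).1 hcol
    obtain ⟨r1, hr1⟩ := hv y (by simp)
    obtain ⟨r2, hr2⟩ := hv z (by simp)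
    rw [collinear_iff_of_mem (Set.mem_insert x {a, b})]
    refine ⟨v, fun p hp => ?_⟩
    have key : ∀ r : ℝ, ∀ c : ℝ × ℝ, x + lam • (c - x) = r • v +ᵥ x
        → c = (r / lam) • v +ᵥ x := by
      intro r c h
      rw [vadd_eq_add, add_comm (r • v) x] at h
      have h' : lam • (c - x) = r • v := add_left_cancel h
      have h'' : c - x = (r / lam) • v := by
        rw [div_eq_inv_mul, mul_smul, ← h', smul_smul, inv_mul_cancel₀ hlamne, one_smul]
      rw [vadd_eq_add]
      exact eq_add_of_sub_eq h''
    simp only [Set.mem_insert_iff, Set.mem_singleton_iff] at hp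
    rcases hp with rfl | rfl | rfl
    · exact ⟨0, by simp⟩
    · exact ⟨r1 / lam, key r1 p (by rw [← hydef]; exact hr1)⟩
    · exact ⟨r2 / lam, key r2 p (by rw [← hzdef]; exact hr2)⟩
  · -- the closed triangle is not contained in U
    intro hsub
    apply hSlam
    intro p hp
    apply hsub
    rw [hhull]
    have hyz : p ∈ segment ℝ y z := hp
    exact Set.mem_biUnion hyz (right_mem_segment ℝ x p)
  · -- the open triangle is contained in U
    intro p hp
    have hp' : p ∈ convexHull ℝ ({x, y, z} : Set (ℝ × ℝ)) := interior_subset hp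
    rw [hhull] at hp'
    obtain ⟨q, hq, hpq⟩ := Set.mem_iUnion₂.1 hp'
    obtain ⟨s1, s2, hs1, hs2, hs12, hpe⟩ := hpq
    obtain ⟨t1, t2, ht1, ht2, ht12, hqe⟩ := hq
    have hs1' : s1 = 1 - s2 := by linarith
    subst hs1'
    have ht1' : t1 = 1 - t2 := by linarith
    subst ht1'
    have hs2le : s2 ≤ 1 := by linarith
    rcases lt_or_eq_of_le hs2le with hs2lt | hs2eq
    · -- p lies on a strictly smaller scaled segment
      have hmem : p ∈ S (s2 * lam) := by
        refine ⟨1 - t2, t2, by linarith, ht2, by ring, ?_⟩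
        rw [← hpe, ← hqe, hydef, hzdef]
        module
      have hμ0 : 0 ≤ s2 * lam := mul_nonneg hs2 hlam0
      have hμlt : s2 * lam < lam := by nlinarith
      exact hbelow (s2 * lam) hμ0 hμlt hmem
    · -- p lies on the segment [y,z]: impossible for an interior point
      exfalso
      subst hs2eq
      set w : ℝ × ℝ := (1 - t2) • (a - x) + t2 • (b - x) with hwdef
      have hwne : w ≠ 0 := by
        intro h0
        obtain ⟨h1, h2⟩ := hind _ _ h0
        linarith
      have hwpos : 0 < ‖w‖ := norm_pos_iff.2 hwne
      have hp_eq : p = x + lam • w := by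
        rw [← hpe, ← hqe, hydef, hzdef, hwdef]; module
      obtain ⟨ε', hε', hball'⟩ := Metric.isOpen_iff.1 isOpen_interior p hp
      set δ := ε' / (2 * ‖w‖) with hδdef
      have hδpos : 0 < δ := by positivity
      have hmem2 : p + δ • w ∈ convexHull ℝ ({x, y, z} : Set (ℝ × ℝ)) := by
        apply interior_subset
        apply hball'
        rw [Metric.mem_ball, dist_eq_norm, add_sub_cancel_left, norm_smul,
          Real.norm_of_nonneg hδpos.le]
        have hcalc : δ * ‖w‖ = ε' / 2 := by
          rw [hδdef]; field_simp
        rw [hcalc]; linarith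
      rw [hhull] at hmem2
      obtain ⟨q', hq', hpq'⟩ := Set.mem_iUnion₂.1 hmem2
      obtain ⟨s1', s2', hs1', hs2', hs12', hpe'⟩ := hpq'
      obtain ⟨t1', t2', ht1', ht2', ht12', hqe'⟩ := hq'
      have e1 : s1' = 1 - s2' := by linarith
      subst e1
      have e2 : t1' = 1 - t2' := by linarith
      subst e2
      have hkey : ((lam + δ) * (1 - t2) - s2' * lam * (1 - t2')) • (a - x)
          + ((lam + δ) * t2 - s2' * lam * t2') • (b - x) = 0 := by
        have e3 : p + δ • w - x = (lam + δ) • w := by rw [hp_eq]; module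
        have e4 : p + δ • w - x
            = (s2' * lam) • ((1 - t2') • (a - x) + t2' • (b - x)) := by
          rw [← hpe', ← hqe', hydef, hzdef]; module
        have e5 : ((lam + δ) * (1 - t2) - s2' * lam * (1 - t2')) • (a - x)
            + ((lam + δ) * t2 - s2' * lam * t2') • (b - x)
            = (lam + δ) • w - (s2' * lam) • ((1 - t2') • (a - x) + t2' • (b - x)) := by
          rw [hwdef]; module
        rw [e5, ← e3, ← e4, sub_self]
      obtain ⟨hc1, hc2⟩ := hind _ _ hkey
      have hsum : lam + δ = s2' * lam := by linear_combination hc1 + hc2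
      have hle : s2' * lam ≤ lam := by nlinarith
      linarith
end

section
/- Let U be an open star-shaped neighborhood of x in ℝ² that is not convex. Then there exist points y', z in U such that the segment [y', z] is not contained in U, and moreover x, y', z are not collinear. -/
/-!
If `x`, `y`, `z` are collinear, one of them lies between the other two. When `y` or `z` is
in the middle, `[y, z]` sits inside `[x, z]` or `[x, y]`; when `x` is in the middle,
`[y, z] = [y, x] ∪ [x, z]`. Either way star-shapedness about `x` puts `[y, z]` inside `U`,
so a segment witnessing non-convexity can never be collinear with `x`.
-/

open Set

section

variable {𝕜 E : Type*} [Field 𝕜] [LinearOrder 𝕜] [IsStrictOrderedRing 𝕜]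
  [AddCommGroup E] [Module 𝕜 E]

theorem segment_subset_union_of_mem_segment {x y z : E} (hx : x ∈ segment 𝕜 y z) :
    segment 𝕜 y z ⊆ segment 𝕜 y x ∪ segment 𝕜 x z := by
  have hx_line : x ∈ range (AffineMap.lineMap y z : 𝕜 → E) := by
    rw [segment_eq_image_lineMap] at hx
    exact image_subset_range _ _ hx
  rw [← insert_endpoints_openSegment]
  rintro p (rfl | rfl | hp)
  · exact Or.inl (left_mem_segment 𝕜 _ _)
  · exact Or.inr (right_mem_segment 𝕜 _ _)
  · rcases openSegment_subset_union y z hx_line hp with rfl | hp | hp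
    · exact Or.inl (right_mem_segment 𝕜 _ _)
    · exact Or.inl (openSegment_subset_segment 𝕜 _ _ hp)
    · exact Or.inr (openSegment_subset_segment 𝕜 _ _ hp)

theorem StarConvex.segment_subset_of_collinear {s : Set E} {x y z : E}
    (hs : StarConvex 𝕜 x s) (hy : y ∈ s) (hz : z ∈ s) (h : Collinear 𝕜 {x, y, z}) :
    segment 𝕜 y z ⊆ s := by
  have hyx : segment 𝕜 y x ⊆ s := segment_symm 𝕜 x y ▸ hs.segment_subset hy
  have hxz : segment 𝕜 x z ⊆ s := hs.segment_subset hz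
  rw [insert_comm, pair_comm] at h
  rcases h.wbtw_or_wbtw_or_wbtw with hyzx | hzxy | hxyz
  · exact ((convex_segment y x).segment_subset (left_mem_segment 𝕜 y x)
      hyzx.mem_segment).trans hyx
  · have hx : x ∈ segment 𝕜 y z := segment_symm 𝕜 z y ▸ hzxy.mem_segment
    exact (segment_subset_union_of_mem_segment hx).trans (union_subset hyx hxz)
  · exact ((convex_segment x z).segment_subset hxyz.mem_segment
      (right_mem_segment 𝕜 x z)).trans hxz

end

theorem flag_structures_stmt1_general (U : Set (ℝ × ℝ)) (x : ℝ × ℝ)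
    (hstar : ∀ u ∈ U, segment ℝ x u ⊆ U)
    (hnc : ¬ Convex ℝ U) :
    ∃ y' ∈ U, ∃ z ∈ U,
      ¬ (segment ℝ y' z ⊆ U) ∧ ¬ Collinear ℝ ({x, y', z} : Set (ℝ × ℝ)) := by
  have hU_star : StarConvex ℝ x U := starConvex_iff_segment_subset.mpr hstar
  rw [convex_iff_segment_subset] at hnc
  push Not at hnc
  obtain ⟨y, hy, z, hz, hyz⟩ := hnc
  exact ⟨y, hy, z, hz, hyz, fun hcol => hyz (hU_star.segment_subset_of_collinear hy hz hcol)⟩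

/-- Let `U` be an open star-shaped neighborhood of `x` in `ℝ²` that is
not convex. Then there exist points `y', z ∈ U` such that the segment `[y', z]` is not
contained in `U` and `x, y', z` are not collinear. -/
theorem flag_structures_stmt1 (U : Set (ℝ × ℝ)) (x : ℝ × ℝ)
    (hU : IsOpen U) (hx : x ∈ U)
    (hstar : ∀ u ∈ U, segment ℝ x u ⊆ U)
    (hnc : ¬ Convex ℝ U) :
    ∃ y' ∈ U, ∃ z ∈ U,
      ¬ (segment ℝ y' z ⊆ U) ∧ ¬ Collinear ℝ ({x, y', z} : Set (ℝ × ℝ)) :=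
  flag_structures_stmt1_general U x hstar hnc
end

section
/- Let u: ℝ × M → ℝ be a continuous cocycle over a flow Φ on M (so u(t+s,x) = u(t, Φ^s x) + u(s,x), u(0,x) = 0). Suppose there exists T > 0 such that u(T,x) ≠ 0 for all x ∈ M. Then the function t ↦ (1/T)∫_t^{T+t} u(s,x) ds is strictly monotone in t for each fixed x; consequently, if F: M → N is a map with F(Φ^t x) = Ψ^{u(t,x)}(F(x)) for a flow Ψ on N whose orbit parametrizations are injective, then x ↦ Ψ^{u_T(x)}(F(x)) with u_T(x) = (1/T)∫₀^T u(s,x) ds is injective along each Φ-orbit. -/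
/-- Let `u` be a continuous cocycle over a flow `Φ` on `M`, and suppose
there exists `T > 0` with `u(T,x) ≠ 0` for all `x`. Then `t ↦ (1/T)∫_t^{T+t} u(s,x) ds`
is strictly monotone for each `x`; consequently, if `F : M → N` satisfies
`F(Φ^t x) = Ψ^{u(t,x)}(F x)` for a flow `Ψ` on `N` with injective orbit parametrizations,
then `x ↦ Ψ^{u_T(x)}(F x)` (with `u_T(x) = (1/T)∫₀^T u(s,x) ds`) is injective along each
`Φ`-orbit. -/
theorem flag_structures_stmt7 {M N : Type*} [TopologicalSpace M] [TopologicalSpace N]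
    (Φ : ℝ → M → M) (hΦc : Continuous fun p : ℝ × M => Φ p.1 p.2)
    (hΦ0 : ∀ x, Φ 0 x = x) (hΦadd : ∀ s t x, Φ (t + s) x = Φ t (Φ s x))
    (u : ℝ → M → ℝ) (hu : Continuous fun p : ℝ × M => u p.1 p.2)
    (hcoc : ∀ s t x, u (t + s) x = u t (Φ s x) + u s x)
    (h0 : ∀ x, u 0 x = 0)
    (T : ℝ) (hT : 0 < T) (hne : ∀ x, u T x ≠ 0) :
    (∀ x, StrictMono (fun t : ℝ => (1/T) * ∫ s in t..(T+t), u s x) ∨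
          StrictAnti (fun t : ℝ => (1/T) * ∫ s in t..(T+t), u s x)) ∧
    (∀ Ψ : ℝ → N → N, (∀ y, Ψ 0 y = y) → (∀ s t y, Ψ (t + s) y = Ψ t (Ψ s y)) →
      (∀ y, Function.Injective fun s : ℝ => Ψ s y) →
      ∀ F : M → N, (∀ t x, F (Φ t x) = Ψ (u t x) (F x)) →
      ∀ x t t',
        Ψ ((1/T) * ∫ s in (0:ℝ)..T, u s (Φ t x)) (F (Φ t x)) =
          Ψ ((1/T) * ∫ s in (0:ℝ)..T, u s (Φ t' x)) (F (Φ t' x)) →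
        Φ t x = Φ t' x) := by
  have hux : ∀ x, Continuous fun s => u s x := fun x =>
    hu.comp (continuous_id.prodMk continuous_const)
  -- derivative of g x t = (1/T) * ∫_t^{T+t} u s x
  have hg : ∀ x t, HasDerivAt (fun t : ℝ => (1/T) * ∫ s in t..(T+t), u s x)
      ((1/T) * u T (Φ t x)) t := by
    intro x t
    have hG : ∀ a : ℝ, HasDerivAt (fun r : ℝ => ∫ s in (0:ℝ)..r, u s x) (u a x) a := by
      intro a
      exact intervalIntegral.integral_hasDerivAt_right ((hux x).intervalIntegrable _ _)
        ((hux x).stronglyMeasurableAtFilter _ _) (hux x).continuousAt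
    have heq : (fun t : ℝ => (1/T) * ∫ s in t..(T+t), u s x) =
        fun t : ℝ => (1/T) * ((∫ s in (0:ℝ)..(T+t), u s x) - ∫ s in (0:ℝ)..t, u s x) := by
      funext t
      rw [intervalIntegral.integral_interval_sub_left ((hux x).intervalIntegrable _ _)
        ((hux x).intervalIntegrable _ _)]
    rw [heq]
    have h1 : HasDerivAt (fun t : ℝ => ∫ s in (0:ℝ)..(T+t), u s x) (u (T+t) x) t := by
      have := (hG (T+t)).comp t ((hasDerivAt_id t).const_add T)
      simpa [Function.comp_def] using this
    have h2 := (h1.sub (hG t)).const_mul (1/T)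
    have : u (T+t) x - u t x = u T (Φ t x) := by rw [hcoc t T x]; ring
    rw [this] at h2
    exact h2
  -- sign of u T (Φ t x) is constant in t
  have hsign : ∀ x, (∀ t : ℝ, 0 < u T (Φ t x)) ∨ (∀ t : ℝ, u T (Φ t x) < 0) := by
    intro x
    have hc : Continuous fun t : ℝ => u T (Φ t x) :=
      (hu.comp ((continuous_const.prodMk (hΦc.comp
        (continuous_id.prodMk continuous_const)) : Continuous fun t : ℝ => ((T, Φ t x) : ℝ × M))))
    have key : ∀ a b : ℝ, 0 < u T (Φ a x) → 0 < u T (Φ b x) := by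
      intro a b ha
      by_contra hb
      push_neg at hb
      have hb' : u T (Φ b x) < 0 := lt_of_le_of_ne hb (hne (Φ b x))
      have h0mem : (0:ℝ) ∈ Set.uIcc (u T (Φ a x)) (u T (Φ b x)) :=
        Set.mem_uIcc.2 (Or.inr ⟨hb'.le, ha.le⟩)
      obtain ⟨s, _, hs⟩ := intermediate_value_uIcc (hc.continuousOn (s := Set.uIcc a b)) h0mem
      exact hne (Φ s x) hs
    rcases lt_or_gt_of_ne (hne (Φ 0 x)) with h | h
    · right
      intro t
      by_contra ht
      push_neg at ht
      have ht' : 0 < u T (Φ t x) := lt_of_le_of_ne ht (Ne.symm (hne (Φ t x)))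
      exact absurd (key t 0 ht') (not_lt.2 h.le)
    · left; exact fun t => key 0 t h
  have hmono : ∀ x, StrictMono (fun t : ℝ => (1/T) * ∫ s in t..(T+t), u s x) ∨
      StrictAnti (fun t : ℝ => (1/T) * ∫ s in t..(T+t), u s x) := by
    intro x
    rcases hsign x with h | h
    · left
      exact strictMono_of_hasDerivAt_pos (hg x) fun t =>
        mul_pos (by positivity) (h t)
    · right
      exact strictAnti_of_hasDerivAt_neg (hg x) fun t =>
        mul_neg_of_pos_of_neg (by positivity) (h t)
  refine ⟨hmono, ?_⟩
  intro Ψ hΨ0 hΨadd hinj F hF x t t' heq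
  -- key integral identity
  have hkey : ∀ t : ℝ, (1/T) * (∫ s in (0:ℝ)..T, u s (Φ t x)) + u t x =
      (1/T) * ∫ s in t..(T+t), u s x := by
    intro t
    have h1 : (∫ s in (0:ℝ)..T, u s (Φ t x)) =
        (∫ s in t..(T+t), u s x) - T * u t x := by
      have e1 : ∀ s : ℝ, u s (Φ t x) = u (s + t) x - u t x := by
        intro s; rw [hcoc t s x]; ring
      calc (∫ s in (0:ℝ)..T, u s (Φ t x))
          = ∫ s in (0:ℝ)..T, (u (s + t) x - u t x) := by
            simp only [e1]
        _ = (∫ s in (0:ℝ)..T, u (s + t) x) - ∫ s in (0:ℝ)..T, u t x := by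
            apply intervalIntegral.integral_sub
            · exact (((hux x).comp (continuous_id.add continuous_const)).intervalIntegrable _ _)
            · exact intervalIntegrable_const
        _ = (∫ s in t..(T+t), u s x) - T * u t x := by
            rw [intervalIntegral.integral_comp_add_right (fun s => u s x) t]
            simp [zero_add]
    rw [h1]
    field_simp
    ring
  have habs : ∀ t : ℝ, Ψ ((1/T) * ∫ s in (0:ℝ)..T, u s (Φ t x)) (F (Φ t x)) =
      Ψ ((1/T) * ∫ s in t..(T+t), u s x) (F x) := by
    intro t
    rw [hF t x, ← hΨadd, hkey t]
  rw [habs t, habs t'] at heq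
  have := hinj (F x) heq
  have htt : t = t' := by
    rcases hmono x with h | h
    · exact h.injective this
    · exact h.injective this
  rw [htt]
end
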